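/- arXiv:2206.07079 — 3 statements merged into one kernel-verified Lean document; each statement's English description precedes it below -/
import Mathlib

section
/- Let $(d_n)_{n\ge1}$ be a nonnegative square-summable sequence and $(x_n)_{n\ge1}$ positive with $x_m/x_n \le C\gamma^{-(n-m)}$ for $m \le n$ (with $C>0$, $\gamma>1$) and $x_n \ge c\beta^n$ for some $c>0$, $\beta>1$. Then $\sum_{n=1}^\infty \frac{d_n}{x_n^2}\Big(1 + \sum_{m=1}^{n-1} d_m x_m^2\Big) < \infty$. -/
/-!
Expanding the product, `κ n = d n / x n ^ 2 + ∑_{m<n} d n * d m * (x m / x n) ^ 2`.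
The first term is an `ℓ² · ℓ²` product because `x n⁻²` decays geometrically. In the second,
`(x m / x n) ^ 2 ≤ C ^ 2 * t ^ (n - m)` with `t = γ⁻²`, and `2 d n d m ≤ d n ^ 2 + d m ^ 2`
splits it into `d n ^ 2` times a geometric sum plus the Cauchy product of `d ^ 2 ∈ ℓ¹` with
`t ^ k ∈ ℓ¹`, both summable.
-/

open Finset

theorem Summable.mul_of_summable_sq {ι : Type*} {f g : ι → ℝ} (hf : Summable fun i => f i ^ 2)
    (hg : Summable fun i => g i ^ 2) : Summable fun i => f i * g i := by
  refine .of_norm_bounded ((hf.add hg).div_const 2) fun i => ?_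
  rw [Real.norm_eq_abs, abs_mul, le_div_iff₀ two_pos, ← sq_abs (f i), ← sq_abs (g i)]
  linarith [two_mul_le_add_sq |f i| |g i|]

theorem summable_inv_pow_of_mul_pow_le {x : ℕ → ℝ} {c β : ℝ} (hc : 0 < c) (hβ : 1 < β)
    (hx : ∀ n, c * β ^ n ≤ x n) {k : ℕ} (hk : k ≠ 0) : Summable fun n => (x n)⁻¹ ^ k := by
  have hρ : β⁻¹ ^ k < 1 := pow_lt_one₀ (by positivity) (inv_lt_one_of_one_lt₀ hβ) hk
  refine .of_nonneg_of_le (fun n => ?_) (fun n => ?_)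
    ((summable_geometric_of_lt_one (by positivity) hρ).mul_left (c⁻¹ ^ k))
  · have := (show 0 < c * β ^ n by positivity).trans_le (hx n)
    positivity
  · have hpos : 0 < c * β ^ n := by positivity
    calc (x n)⁻¹ ^ k ≤ (c * β ^ n)⁻¹ ^ k :=
          pow_le_pow_left₀ (inv_pos.2 (hpos.trans_le (hx n))).le (inv_anti₀ hpos (hx n)) k
      _ = c⁻¹ ^ k * (β⁻¹ ^ k) ^ n := by
          rw [mul_inv, mul_pow, ← inv_pow β n, ← pow_mul, ← pow_mul, mul_comm n k]

theorem sum_range_succ_pow_sub_le {t : ℝ} (ht0 : 0 ≤ t) (ht1 : t < 1) (n : ℕ) :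
    ∑ m ∈ range (n + 1), t ^ (n - m) ≤ (1 - t)⁻¹ := by
  have := geom_sum_Ico_le_of_lt_one (m := 0) (n := n + 1) ht0 ht1
  rwa [← range_eq_Ico, ← sum_range_reflect, pow_zero, one_div] at this

theorem summable_sum_range_mul_mul_pow_sub {a : ℕ → ℝ} (ha0 : ∀ n, 0 ≤ a n)
    (ha : Summable fun n => a n ^ 2) {t : ℝ} (ht0 : 0 ≤ t) (ht1 : t < 1) :
    Summable fun n => ∑ m ∈ range n, a n * a m * t ^ (n - m) := by
  have hgeom : Summable fun n => ‖t ^ n‖ := by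
    simpa [abs_of_nonneg ht0] using summable_geometric_of_lt_one ht0 ht1
  have hconv : Summable fun n => ∑ m ∈ range (n + 1), a m ^ 2 * t ^ (n - m) :=
    summable_sum_mul_range_of_summable_norm' (by simpa using ha) ha hgeom hgeom.of_norm
  refine .of_nonneg_of_le (fun n => sum_nonneg fun m _ => ?_) (fun n => ?_)
    (((ha.mul_right (1 - t)⁻¹).add hconv).div_const 2)
  · have := ha0 n; have := ha0 m
    positivity
  calc ∑ m ∈ range n, a n * a m * t ^ (n - m)
      ≤ ∑ m ∈ range (n + 1), a n * a m * t ^ (n - m) :=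
        sum_le_sum_of_subset_of_nonneg (range_subset_range.2 n.le_succ) fun m _ _ => by
          have := ha0 n; have := ha0 m
          positivity
    _ ≤ ∑ m ∈ range (n + 1), (a n ^ 2 * t ^ (n - m) + a m ^ 2 * t ^ (n - m)) / 2 :=
        sum_le_sum fun m _ => by
          have := two_mul_le_add_sq (a n) (a m)
          have := pow_nonneg ht0 (n - m)
          nlinarith
    _ = (a n ^ 2 * ∑ m ∈ range (n + 1), t ^ (n - m)
          + ∑ m ∈ range (n + 1), a m ^ 2 * t ^ (n - m)) / 2 := by
        rw [← sum_div, sum_add_distrib, mul_sum]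
    _ ≤ (a n ^ 2 * (1 - t)⁻¹ + ∑ m ∈ range (n + 1), a m ^ 2 * t ^ (n - m)) / 2 := by
        gcongr
        exact sum_range_succ_pow_sub_le ht0 ht1 n

theorem div_sq_le_of_div_le_zpow {a b C γ : ℝ} {m n : ℕ} (hmn : m ≤ n) (hab : 0 ≤ a / b)
    (h : a / b ≤ C * γ ^ (-((n : ℤ) - (m : ℤ)))) : (a / b) ^ 2 ≤ C ^ 2 * (γ⁻¹ ^ 2) ^ (n - m) := by
  rw [← Nat.cast_sub hmn, zpow_neg, zpow_natCast, ← inv_pow] at h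
  rw [← pow_mul, mul_comm 2, pow_mul, ← mul_pow]
  exact pow_le_pow_left₀ hab h 2

theorem div_sq_mul_one_add_sum_eq (d x : ℕ → ℝ) {n : ℕ} (hx : x n ≠ 0) :
    d n / x n ^ 2 * (1 + ∑ m ∈ range n, d m * x m ^ 2)
      = d n * (x n)⁻¹ ^ 2 + ∑ m ∈ range n, d n * d m * (x m / x n) ^ 2 := by
  rw [mul_add, mul_one, mul_sum, inv_pow, div_eq_mul_inv]
  congr 1
  refine sum_congr rfl fun m _ => ?_
  field_simp

theorem stmt_7_general (d x : ℕ → ℝ) (C γ c β : ℝ) (hγ : 1 < γ)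
    (hc : 0 < c) (hβ : 1 < β)
    (hd0 : ∀ n, 0 ≤ d n) (hd2 : Summable (fun n => d n ^ 2))
    (hratio : ∀ m n : ℕ, m ≤ n → x m / x n ≤ C * γ ^ (-((n : ℤ) - (m : ℤ))))
    (hgrowth : ∀ n : ℕ, c * β ^ n ≤ x n) :
    Summable (fun n : ℕ =>
      d n / x n ^ 2 * (1 + ∑ m ∈ Finset.range n, d m * x m ^ 2)) := by
  have hxpos n : 0 < x n := (show 0 < c * β ^ n by positivity).trans_le (hgrowth n)
  have ht1 : γ⁻¹ ^ 2 < 1 := pow_lt_one₀ (by positivity) (inv_lt_one_of_one_lt₀ hγ) two_ne_zero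
  have hfree : Summable fun n => d n * (x n)⁻¹ ^ 2 :=
    hd2.mul_of_summable_sq (by simpa only [← pow_mul] using
      summable_inv_pow_of_mul_pow_le hc hβ hgrowth (k := 2 * 2) (by norm_num))
  have hinteraction :=
    (summable_sum_range_mul_mul_pow_sub hd0 hd2 (by positivity) ht1).mul_left (C ^ 2)
  refine (hfree.add hinteraction).of_nonneg_of_le (fun n => ?_) (fun n => ?_)
  · exact mul_nonneg (div_nonneg (hd0 n) (sq_nonneg _))
      (add_nonneg zero_le_one (sum_nonneg fun m _ => mul_nonneg (hd0 m) (sq_nonneg _)))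
  rw [div_sq_mul_one_add_sum_eq d x (hxpos n).ne', mul_sum]
  refine add_le_add le_rfl (sum_le_sum fun m hm => ?_)
  have hmn := (mem_range.1 hm).le
  calc d n * d m * (x m / x n) ^ 2 ≤ d n * d m * (C ^ 2 * (γ⁻¹ ^ 2) ^ (n - m)) :=
        mul_le_mul_of_nonneg_left
          (div_sq_le_of_div_le_zpow hmn (div_pos (hxpos m) (hxpos n)).le (hratio m n hmn))
          (mul_nonneg (hd0 n) (hd0 m))
    _ = C ^ 2 * (d n * d m * (γ⁻¹ ^ 2) ^ (n - m)) := by ring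

/-- Summability of `κ_n = (d_n / x_n²)(1 + ∑_{m<n} d_m x_m²)` under geometric ratio
decay of `x_m/x_n` and exponential lower bound `x_n ≥ c β^n`. -/
theorem stmt_7 (d x : ℕ → ℝ) (C γ c β : ℝ) (hC : 0 < C) (hγ : 1 < γ)
    (hc : 0 < c) (hβ : 1 < β)
    (hd0 : ∀ n, 0 ≤ d n) (hd2 : Summable (fun n => d n ^ 2))
    (hx0 : ∀ n, 0 < x n)
    (hratio : ∀ m n : ℕ, m ≤ n → x m / x n ≤ C * γ ^ (-((n : ℤ) - (m : ℤ))))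
    (hgrowth : ∀ n : ℕ, c * β ^ n ≤ x n) :
    Summable (fun n : ℕ =>
      d n / x n ^ 2 * (1 + ∑ m ∈ Finset.range n, d m * x m ^ 2)) :=
  stmt_7_general d x C γ c β hγ hc hβ hd0 hd2 hratio hgrowth
end

section
/- Let $(B_n)_{n \ge 0}$ be nonnegative reals with $B_n \le B_{n-1} + 2\alpha_n\sqrt{B_{n-1}} + \beta_n$ for all $n \ge 1$, where $\alpha_n, \beta_n \ge 0$. Then for every $n$, $\sqrt{B_n} \le \sqrt{B_0} + \sum_{m=1}^n \alpha_m + \big(\sum_{m=1}^n \beta_m\big)^{1/2}$. -/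
/-!
Induction on `n`: writing `S = √B₀ + ∑ α` and `C = ∑ β`, the recursion gives
`B_{n+1} ≤ (√B_n + α_{n+1})² + β_{n+1} ≤ (S + α_{n+1} + √C)² + β_{n+1}`, and adding `β_{n+1}`
under the square root only increases the cross term: `(T + √C)² + b ≤ (T + √(C + b))²` for `T ≥ 0`.
-/

open Finset

lemma add_two_mul_mul_sqrt_le_sq (y a : ℝ) : y + 2 * a * √y ≤ (√y + a) ^ 2 := by
  have hy : y ≤ √y ^ 2 := by rw [Real.sq_sqrt']; exact le_max_left y 0
  nlinarith [sq_nonneg a]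

lemma sq_add_sqrt_add_le_sq {T C b : ℝ} (hT : 0 ≤ T) (hC : 0 ≤ C) (hb : 0 ≤ b) :
    (T + √C) ^ 2 + b ≤ (T + √(C + b)) ^ 2 := by
  have hmono : √C ≤ √(C + b) := Real.sqrt_le_sqrt (by linarith)
  nlinarith [Real.sq_sqrt hC, Real.sq_sqrt (add_nonneg hC hb), mul_le_mul_of_nonneg_left hmono hT]

lemma sqrt_le_of_le_add_two_mul_mul_sqrt_add {x y a b S C : ℝ} (ha : 0 ≤ a) (hb : 0 ≤ b)
    (hS : 0 ≤ S) (hC : 0 ≤ C) (hx : x ≤ y + 2 * a * √y + b) (hy : √y ≤ S + √C) :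
    √x ≤ S + a + √(C + b) := by
  refine Real.sqrt_le_iff.mpr ⟨by positivity, ?_⟩
  calc x ≤ (√y + a) ^ 2 + b := by linarith [add_two_mul_mul_sqrt_le_sq y a]
    _ ≤ (S + a + √C) ^ 2 + b := by gcongr ?_ ^ 2 + b; linarith
    _ ≤ (S + a + √(C + b)) ^ 2 := sq_add_sqrt_add_le_sq (by positivity) hC hb

theorem stmt_15_general (B α β : ℕ → ℝ)
    (hα0 : ∀ n, 0 ≤ α n) (hβ0 : ∀ n, 0 ≤ β n)
    (hrec : ∀ n : ℕ, B (n + 1) ≤ B n + 2 * α (n + 1) * Real.sqrt (B n) + β (n + 1)) :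
    ∀ n : ℕ, Real.sqrt (B n) ≤
      Real.sqrt (B 0) + (∑ m ∈ Finset.Icc 1 n, α m) +
        Real.sqrt (∑ m ∈ Finset.Icc 1 n, β m) := by
  intro n
  induction n with
  | zero => simp
  | succ n ih =>
    rw [sum_Icc_succ_top (by omega), sum_Icc_succ_top (by omega), ← add_assoc]
    have hS : 0 ≤ √(B 0) + ∑ m ∈ Icc 1 n, α m :=
      add_nonneg (Real.sqrt_nonneg _) (sum_nonneg fun m _ => hα0 m)
    exact sqrt_le_of_le_add_two_mul_mul_sqrt_add (hα0 _) (hβ0 _) hS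
      (sum_nonneg fun m _ => hβ0 m) (hrec n) ih

/-- Kiselev–Last–Simon discrete inequality: if `B_n ≤ B_{n-1} + 2 α_n √(B_{n-1}) + β_n`
with `α, β ≥ 0`, then `√(B_n) ≤ √(B_0) + ∑_{m=1}^n α_m + (∑_{m=1}^n β_m)^{1/2}`. -/
theorem stmt_15 (B α β : ℕ → ℝ)
    (hB0 : ∀ n, 0 ≤ B n) (hα0 : ∀ n, 0 ≤ α n) (hβ0 : ∀ n, 0 ≤ β n)
    (hrec : ∀ n : ℕ, B (n + 1) ≤ B n + 2 * α (n + 1) * Real.sqrt (B n) + β (n + 1)) :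
    ∀ n : ℕ, Real.sqrt (B n) ≤
      Real.sqrt (B 0) + (∑ m ∈ Finset.Icc 1 n, α m) +
        Real.sqrt (∑ m ∈ Finset.Icc 1 n, β m) :=
  stmt_15_general B α β hα0 hβ0 hrec
end

section
/- Let $(x_n)_{n\ge1}$ be a positive increasing sequence with $x_n/x_{n+1} \to 0$ and $x_n \ge C\beta^n$ for some $C>0$, $\beta>1$, let $\Delta > 0$, and let $(R_n)_{n \ge 1}$ be positive reals with $R_n^2 \ge \exp(-2C'\sum_{m=1}^n d_m)$ for a bounded nonnegative sequence $(d_m)$. Then $(x_{n+1} - x_n - 2\Delta) R_n^2 \to \infty$ as $n \to \infty$. -/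
/-!
If `a n / a (n + 1) → 0`, then eventually `a (n + 1) ≥ 2 a n`, so `a` grows geometrically; the
same holds for `a n · e^{K n}`, whose consecutive ratios are those of `a` times `e^{-K}`. The bound
on `R n ^ 2` is exponential in `n`, so `x (n + 1) R n ^ 2 → ∞`, and the gap
`x (n + 1) - x n - 2Δ` is `x (n + 1) (1 + o(1))`.
-/

open Filter Topology

theorem tendsto_atTop_of_div_succ_tendsto_zero {a : ℕ → ℝ} (ha : ∀ n, 0 < a n)
    (h : Tendsto (fun n => a n / a (n + 1)) atTop (𝓝 0)) : Tendsto a atTop atTop := by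
  obtain ⟨N, hN⟩ := eventually_atTop.mp (h.eventually_lt_const (by norm_num : (0 : ℝ) < 1 / 2))
  rw [← tendsto_add_atTop_iff_nat N]
  refine tendsto_atTop_of_geom_le (ha _) one_lt_two fun n => ?_
  have hstep := (div_lt_iff₀ (ha (n + N + 1))).mp (hN (n + N) (by omega))
  rw [show n + 1 + N = n + N + 1 by omega]
  linarith

theorem tendsto_mul_exp_mul_atTop_of_div_succ_tendsto_zero {a : ℕ → ℝ} (ha : ∀ n, 0 < a n)
    (h : Tendsto (fun n => a n / a (n + 1)) atTop (𝓝 0)) (K : ℝ) :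
    Tendsto (fun n : ℕ => a n * Real.exp (K * n)) atTop atTop := by
  refine tendsto_atTop_of_div_succ_tendsto_zero (fun n => mul_pos (ha n) (Real.exp_pos _)) ?_
  have hratio : ∀ n : ℕ, a n * Real.exp (K * n) / (a (n + 1) * Real.exp (K * ↑(n + 1))) =
      a n / a (n + 1) * Real.exp (-K) := by
    intro n
    push_cast
    rw [mul_add, mul_one, Real.exp_add, Real.exp_neg]
    field_simp
  simpa only [hratio, zero_mul] using h.mul_const (Real.exp (-K))

theorem sum_Icc_one_le_mul {d : ℕ → ℝ} {M : ℝ} (hdM : ∀ n, d n ≤ M) (n : ℕ) :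
    ∑ m ∈ Finset.Icc 1 n, d m ≤ n * M := by
  simpa using Finset.sum_le_card_nsmul (Finset.Icc 1 n) d M fun m _ => hdM m

theorem stmt_17_general (x R d : ℕ → ℝ) (Δ C' M : ℝ)
    (hC' : 0 ≤ C')
    (hx0 : ∀ n, 0 < x n)
    (hxratio : Tendsto (fun n => x n / x (n + 1)) atTop (nhds 0))
    (hdM : ∀ n, d n ≤ M)
    (hRlow : ∀ n : ℕ, Real.exp (-(2 * C' * ∑ m ∈ Finset.Icc 1 n, d m)) ≤ R n ^ 2) :
    Tendsto (fun n : ℕ => (x (n + 1) - x n - 2 * Δ) * R n ^ 2) atTop atTop := by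
  have hxtop : Tendsto x atTop atTop := tendsto_atTop_of_div_succ_tendsto_zero hx0 hxratio
  have hxsucc : Tendsto (fun n => x (n + 1)) atTop atTop := hxtop.comp (tendsto_add_atTop_nat 1)
  have hRexp : ∀ n : ℕ, Real.exp (-(2 * C' * M) * n) ≤ R n ^ 2 := fun n =>
    le_trans (Real.exp_le_exp.mpr (by nlinarith [sum_Icc_one_le_mul hdM n])) (hRlow n)
  have hxR : Tendsto (fun n => x (n + 1) * R n ^ 2) atTop atTop :=
    tendsto_atTop_mono (fun n => mul_le_mul_of_nonneg_left (hRexp n) (hx0 _).le)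
      (tendsto_mul_exp_mul_atTop_of_div_succ_tendsto_zero (fun n => hx0 (n + 1))
        (hxratio.comp (tendsto_add_atTop_nat 1)) _)
  have hgap : Tendsto (fun n => 1 - x n / x (n + 1) - 2 * Δ / x (n + 1)) atTop (𝓝 1) := by
    simpa using (tendsto_const_nhds.sub hxratio).sub (hxsucc.const_div_atTop (2 * Δ))
  refine (hgap.pos_mul_atTop one_pos hxR).congr fun n => ?_
  have := (hx0 (n + 1)).ne'
  field_simp

/-- If `x_n` is positive increasing with `x_n / x_{n+1} → 0` and `x_n ≥ C β^n`, and
`R_n² ≥ exp(-2C' ∑_{m≤n} d_m)` with `d` bounded nonnegative, then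
`(x_{n+1} - x_n - 2Δ) R_n² → ∞`. -/
theorem stmt_17 (x R d : ℕ → ℝ) (C β Δ C' M : ℝ)
    (hC : 0 < C) (hβ : 1 < β) (hΔ : 0 < Δ) (hC' : 0 ≤ C')
    (hx0 : ∀ n, 0 < x n) (hxmono : StrictMono x)
    (hxratio : Tendsto (fun n => x n / x (n + 1)) atTop (nhds 0))
    (hxgrowth : ∀ n : ℕ, C * β ^ n ≤ x n)
    (hR0 : ∀ n, 0 < R n)
    (hd0 : ∀ n, 0 ≤ d n) (hdM : ∀ n, d n ≤ M)
    (hRlow : ∀ n : ℕ, Real.exp (-(2 * C' * ∑ m ∈ Finset.Icc 1 n, d m)) ≤ R n ^ 2) :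
    Tendsto (fun n : ℕ => (x (n + 1) - x n - 2 * Δ) * R n ^ 2) atTop atTop :=
  stmt_17_general x R d Δ C' M hC' hx0 hxratio hdM hRlow
end
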